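/- arXiv:1508.02580 — 3 statements merged into one kernel-verified Lean document; each statement's English description precedes it below -/
import Mathlib

section
/- Let p be a prime. Then, as an identity of formal power series with integer coefficients, Φ_p^p(z) − Φ_p(z) + z = Σ_{r=2}^{p} Σ_{(b_1,…,b_r)} (p!/(b_1!·b_2!·…·b_r!)) · H_{b_1,b_2,…,b_r}(z), where the inner sum ranges over all compositions (b_1,…,b_r) of p into r positive integer parts (b_i ≥ 1, b_1+…+b_r = p). In particular, every coefficient of Φ_p^p(z) − Φ_p(z) + z is divisible by p. -/
/-!
The truncation `∑_{n ≤ m} z^{p^n}` agrees with `Φ_p` up to degree `m`, so the coefficient of `z^m`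
in `Φ_p^p` can be read off from the multinomial expansion of its `p`-th power. A term of that
expansion is indexed by an exponent vector `k` with `∑ k = p`; listing the support of `k` in
decreasing order `n_1 > ⋯ > n_r` and putting `b_i = k_{n_i}` turns `k` into a composition `b` of
`p` together with a strictly decreasing tuple `n`, and the term into
`p!/(b_1!⋯b_r!) z^{∑ b_i p^{n_i}}`. Grouping by `b` gives `Φ_p^p = ∑_b (p!/∏ b_i!) H_b`. The
composition `(p)` contributes `H_{(p)} = Φ_p − z`, and for `r ≥ 2` every part is smaller than the
prime `p`, which therefore divides `p!/∏ b_i!`.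
-/

open PowerSeries
open scoped Classical

noncomputable def Phi (p : ℕ) : PowerSeries ℤ :=
  PowerSeries.mk fun m => if ∃ n : ℕ, m = p ^ n then 1 else 0

noncomputable def Hser (p : ℕ) {r : ℕ} (b : Fin r → ℕ) : PowerSeries ℤ :=
  PowerSeries.mk fun m =>
    ((Set.ncard {n : Fin r → ℕ | StrictAnti n ∧ ∑ i, b i * p ^ n i = m} : ℕ) : ℤ)

open Finset Function

theorem Nat.multinomial_image {ι α : Type*} [DecidableEq α] (s : Finset ι) {e : ι → α}
    (he : Injective e) (f : α → ℕ) :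
    Nat.multinomial (s.image e) f = Nat.multinomial s (f ∘ e) := by
  simp only [Nat.multinomial, sum_image he.injOn, prod_image he.injOn, comp_apply]

theorem Finset.card_filter_ne_zero_le_sum {α : Type*} (s : Finset α) (k : α → ℕ) :
    #{j ∈ s | k j ≠ 0} ≤ ∑ j ∈ s, k j :=
  calc #{j ∈ s | k j ≠ 0} ≤ ∑ j ∈ s with k j ≠ 0, k j := by
        simpa using card_nsmul_le_sum _ _ 1 fun j hj =>
          Nat.one_le_iff_ne_zero.mpr (mem_filter.mp hj).2
    _ ≤ ∑ j ∈ s, k j := sum_le_sum_of_subset (filter_subset _ _)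

theorem Nat.Prime.dvd_multinomial {ι : Type*} {p : ℕ} (hp : p.Prime) {s : Finset ι} {f : ι → ℕ}
    (hsum : ∑ i ∈ s, f i = p) (hlt : ∀ i ∈ s, f i < p) : p ∣ Nat.multinomial s f := by
  have hdvd : p ∣ (∏ i ∈ s, (f i).factorial) * Nat.multinomial s f := by
    rw [Nat.multinomial_spec, hsum]
    exact Nat.dvd_factorial hp.pos le_rfl
  refine (hp.dvd_mul.mp hdvd).resolve_left fun h => ?_
  obtain ⟨i, hi, hpi⟩ := (Prime.dvd_finsetProd_iff hp.prime _).mp h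
  exact (hlt i hi).not_ge (hp.dvd_factorial.mp hpi)

section Scatter

variable {α : Type*} [DecidableEq α] {r : ℕ} {n : Fin r → α} {b : Fin r → ℕ}

def scatter (n : Fin r → α) (b : Fin r → ℕ) (j : α) : ℕ :=
  ∑ i, if n i = j then b i else 0

lemma scatter_apply_of_injective (hn : Injective n) (i : Fin r) : scatter n b (n i) = b i := by
  rw [scatter, sum_eq_single i (fun i' _ hi' => if_neg fun h => hi' (hn h)) (by simp), if_pos rfl]

lemma scatter_eq_zero {j : α} (hj : j ∉ univ.image n) : scatter n b j = 0 :=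
  sum_eq_zero fun i _ => if_neg fun h : n i = j => hj (h ▸ mem_image_of_mem n (mem_univ i))

lemma sum_scatter {s : Finset α} (hns : ∀ i, n i ∈ s) : ∑ j ∈ s, scatter n b j = ∑ i, b i := by
  simp only [scatter]
  rw [sum_comm]
  exact sum_congr rfl fun i _ => by rw [sum_ite_eq, if_pos (hns i)]

lemma filter_scatter_ne_zero {s : Finset α} (hn : Injective n) (hns : ∀ i, n i ∈ s)
    (hb : ∀ i, 0 < b i) : {j ∈ s | scatter n b j ≠ 0} = univ.image n := by
  ext j
  simp only [mem_filter, mem_image, mem_univ, true_and]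
  constructor
  · rintro ⟨-, hj⟩
    by_contra h
    exact hj (scatter_eq_zero (by simpa using h))
  · rintro ⟨i, rfl⟩
    exact ⟨hns i, by rw [scatter_apply_of_injective hn]; exact (hb i).ne'⟩

lemma multinomial_scatter {s : Finset α} (hn : Injective n) (hns : ∀ i, n i ∈ s) :
    Nat.multinomial s (scatter n b) = Nat.multinomial univ b := by
  have himage : univ.image n ⊆ s := by
    intro j hj
    obtain ⟨i, -, rfl⟩ := mem_image.mp hj
    exact hns i
  rw [← Nat.multinomial_congr_of_sdiff himage
      (fun j hj => scatter_eq_zero (mem_sdiff.mp hj).2) fun _ _ => rfl,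
    Nat.multinomial_image _ hn]
  exact Nat.multinomial_congr fun i _ => scatter_apply_of_injective hn i

lemma prod_pow_scatter {M : Type*} [CommMonoid M] {s : Finset α} (hn : Injective n)
    (hns : ∀ i, n i ∈ s) (x : α → M) :
    ∏ j ∈ s, x j ^ scatter n b j = ∏ i, x (n i) ^ b i := by
  rw [← prod_subset (s₁ := univ.image n) (by simpa [subset_iff] using hns)
      fun j _ hj => by rw [scatter_eq_zero hj, pow_zero],
    prod_image hn.injOn]
  exact prod_congr rfl fun i _ => by rw [scatter_apply_of_injective hn]

end Scatter

def posCompositions (r q : ℕ) : Finset (Fin r → ℕ) :=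
  (Finset.Nat.antidiagonalTuple r q).filter fun b => ∀ i, 0 < b i

@[simp]
lemma mem_posCompositions {r q : ℕ} {b : Fin r → ℕ} :
    b ∈ posCompositions r q ↔ ∑ i, b i = q ∧ ∀ i, 0 < b i := by
  simp [posCompositions, Finset.Nat.mem_antidiagonalTuple]

lemma posCompositions_zero {q : ℕ} (hq : q ≠ 0) : posCompositions 0 q = ∅ := by
  obtain ⟨q, rfl⟩ := Nat.exists_eq_succ_of_ne_zero hq
  simp [posCompositions, Finset.Nat.antidiagonalTuple_zero_succ]

lemma posCompositions_one {q : ℕ} (hq : 0 < q) : posCompositions 1 q = {![q]} := by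
  simp [posCompositions, Finset.Nat.antidiagonalTuple_one, hq]

lemma lt_of_mem_posCompositions {r q : ℕ} (hr : 2 ≤ r) {b : Fin r → ℕ}
    (hb : b ∈ posCompositions r q) (i : Fin r) : b i < q := by
  obtain ⟨hsum, hpos⟩ := mem_posCompositions.mp hb
  have hne : (univ.erase i).Nonempty := by
    rw [← card_pos, card_erase_of_mem (mem_univ i), card_univ, Fintype.card_fin]
    omega
  have := add_sum_erase univ b (mem_univ i)
  have := sum_pos (fun j _ => hpos j) hne
  omega

section DescEnum

variable {α : Type*} [LinearOrder α] {r : ℕ}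

def Finset.descEnum (D : Finset α) (h : #D = r) (i : Fin r) : α :=
  D.orderEmbOfFin h i.rev

variable (D : Finset α) (h : #D = r)

lemma Finset.descEnum_strictAnti : StrictAnti (D.descEnum h) :=
  fun _ _ hab => (D.orderEmbOfFin h).strictMono (Fin.rev_lt_rev.mpr hab)

lemma Finset.descEnum_mem (i : Fin r) : D.descEnum h i ∈ D :=
  orderEmbOfFin_mem D h _

lemma Finset.image_descEnum : univ.image (D.descEnum h) = D := by
  conv_rhs => rw [← image_orderEmbOfFin_univ D h, ← image_univ_equiv Fin.revPerm, image_image]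
  rfl

end DescEnum

section Expansion

variable {α : Type*} [LinearOrder α] {s : Finset α} {q r : ℕ}

lemma scatter_mem_piAntidiag {b : Fin r → ℕ} {n : Fin r → α} (hb : b ∈ posCompositions r q)
    (hns : ∀ i, n i ∈ s) : scatter n b ∈ piAntidiag s q := by
  refine mem_piAntidiag.mpr ⟨(sum_scatter hns).trans (mem_posCompositions.mp hb).1, fun j hj => ?_⟩
  by_contra hjs
  refine hj (scatter_eq_zero fun hj' => hjs ?_)
  obtain ⟨i, -, rfl⟩ := mem_image.mp hj'
  exact hns i

lemma scatter_injOn :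
    Set.InjOn (fun bn : (Fin r → ℕ) × (Fin r → α) => scatter bn.2 bn.1)
      ↑(posCompositions r q ×ˢ {n ∈ Fintype.piFinset fun _ : Fin r => s | StrictAnti n}) := by
  rintro ⟨b, n⟩ hbn ⟨b', n'⟩ hbn' heq
  simp only [coe_product, coe_filter, Set.mem_prod, mem_coe, mem_posCompositions,
    Set.mem_ofPred_eq, Fintype.mem_piFinset] at hbn hbn' heq
  obtain ⟨⟨-, hb⟩, hns, hn⟩ := hbn
  obtain ⟨⟨-, hb'⟩, hns', hn'⟩ := hbn'
  have himage : univ.image n = univ.image n' := by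
    rw [← filter_scatter_ne_zero hn.injective hns hb, heq,
      filter_scatter_ne_zero hn'.injective hns' hb']
  obtain rfl : n = n' := by
    rw [← hn.range_inj hn', ← Set.image_univ, ← Set.image_univ, ← coe_univ, ← coe_image,
      ← coe_image, himage]
  refine Prod.ext (funext fun i => ?_) rfl
  change b i = b' i
  rw [← scatter_apply_of_injective (b := b) hn.injective i, heq,
    scatter_apply_of_injective hn.injective]

lemma surjOn_scatter :
    Set.SurjOn (fun bn : (Fin r → ℕ) × (Fin r → α) => scatter bn.2 bn.1)
      ↑(posCompositions r q ×ˢ {n ∈ Fintype.piFinset fun _ : Fin r => s | StrictAnti n})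
      ↑{k ∈ piAntidiag s q | #{j ∈ s | k j ≠ 0} = r} := by
  intro k hk
  simp only [coe_filter, Set.mem_ofPred_eq, mem_piAntidiag] at hk
  obtain ⟨⟨hsum, hsupp⟩, hcard⟩ := hk
  set D := {j ∈ s | k j ≠ 0}
  have hk_ne_zero : ∀ i, k (D.descEnum hcard i) ≠ 0 :=
    fun i => (mem_filter.mp (D.descEnum_mem hcard i)).2
  refine ⟨(k ∘ D.descEnum hcard, D.descEnum hcard), ?_, ?_⟩
  · simp only [coe_product, coe_filter, Set.mem_prod, mem_coe, mem_posCompositions,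
      Set.mem_ofPred_eq, Fintype.mem_piFinset, comp_apply]
    refine ⟨⟨?_, fun i => Nat.pos_of_ne_zero (hk_ne_zero i)⟩,
      fun i => (mem_filter.mp (D.descEnum_mem hcard i)).1, D.descEnum_strictAnti hcard⟩
    rw [← sum_image (f := k) (D.descEnum_strictAnti hcard).injective.injOn, D.image_descEnum,
      sum_filter_ne_zero, hsum]
  · ext j
    dsimp only
    by_cases hj : j ∈ D
    · rw [← D.image_descEnum hcard] at hj
      obtain ⟨i, -, rfl⟩ := mem_image.mp hj
      exact scatter_apply_of_injective (D.descEnum_strictAnti hcard).injective i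
    · rw [scatter_eq_zero (by rwa [D.image_descEnum hcard])]
      by_contra hkj
      exact hj (mem_filter.mpr ⟨hsupp j (Ne.symm hkj), Ne.symm hkj⟩)

theorem Finset.sum_pow_eq_sum_posCompositions {R : Type*} [CommSemiring R] (s : Finset α)
    (x : α → R) (q : ℕ) :
    (∑ j ∈ s, x j) ^ q = ∑ r ∈ range (q + 1), ∑ b ∈ posCompositions r q,
      (Nat.multinomial univ b : R) *
        ∑ n ∈ Fintype.piFinset (fun _ : Fin r => s) with StrictAnti n, ∏ i, x (n i) ^ b i := by
  rw [sum_pow_eq_sum_piAntidiag, ← sum_fiberwise_of_maps_to (t := range (q + 1))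
    (g := fun k => #{j ∈ s | k j ≠ 0}) fun k hk => mem_range_succ_iff.mpr <|
      (card_filter_ne_zero_le_sum s k).trans (mem_piAntidiag.mp hk).1.le]
  refine sum_congr rfl fun r _ => ?_
  simp_rw [mul_sum]
  rw [← sum_product']
  symm
  refine sum_nbij (fun bn => scatter bn.2 bn.1) (fun bn hbn => ?_) scatter_injOn surjOn_scatter
    fun bn hbn => ?_
  all_goals
    obtain ⟨b, n⟩ := bn
    simp only [mem_product, mem_filter, Fintype.mem_piFinset] at hbn
    obtain ⟨hb, hns, hn⟩ := hbn
  · refine mem_filter.mpr ⟨scatter_mem_piAntidiag hb hns, ?_⟩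
    rw [filter_scatter_ne_zero hn.injective hns (mem_posCompositions.mp hb).2,
      card_image_of_injective _ hn.injective, card_univ, Fintype.card_fin]
  · rw [multinomial_scatter hn.injective hns, prod_pow_scatter hn.injective hns]

end Expansion

namespace PowerSeries

variable {R : Type*} [CommRing R]

theorem coeff_natCast_mul (k m : ℕ) (f : R⟦X⟧) : coeff m ((k : R⟦X⟧) * f) = k * coeff m f := by
  rw [← map_natCast C, coeff_C_mul]

theorem coeff_pow_eq_of_coeff_eq {f g : R⟦X⟧} {m : ℕ} (h : ∀ j ≤ m, coeff j f = coeff j g)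
    (q : ℕ) : coeff m (f ^ q) = coeff m (g ^ q) := by
  have hdvd : X ^ (m + 1) ∣ f - g :=
    X_pow_dvd_iff.mpr fun j hj => by rw [map_sub, h j (by omega), sub_self]
  have := X_pow_dvd_iff.mp (hdvd.trans (sub_dvd_pow_sub_pow f g q)) m m.lt_succ_self
  rwa [map_sub, sub_eq_zero] at this

end PowerSeries

section Phi

variable {p : ℕ}

lemma coeff_Phi (m : ℕ) : coeff m (Phi p) = if ∃ n : ℕ, m = p ^ n then 1 else 0 :=
  coeff_mk _ _

lemma coeff_Phi_eq_coeff_sum_X_pow (hp : 2 ≤ p) {m j : ℕ} (hj : j ≤ m) :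
    coeff j (Phi p) = coeff j (∑ n ∈ range (m + 1), X ^ p ^ n : ℤ⟦X⟧) := by
  simp only [coeff_Phi, map_sum, coeff_X_pow]
  split_ifs with h
  · obtain ⟨t, rfl⟩ := h
    simp_rw [(Nat.pow_right_injective hp).eq_iff, sum_ite_eq]
    rw [if_pos (mem_range_succ_iff.mpr ((Nat.lt_pow_self (by omega)).le.trans hj))]
  · exact (sum_eq_zero fun n _ => if_neg fun hn => h ⟨n, hn⟩).symm

lemma coeff_Hser (hp : 2 ≤ p) {r : ℕ} {b : Fin r → ℕ} (hb : ∀ i, 0 < b i) (m : ℕ) :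
    coeff m (Hser p b) = #{n ∈ Fintype.piFinset (fun _ : Fin r => range (m + 1)) |
      StrictAnti n ∧ ∑ i, b i * p ^ n i = m} := by
  rw [Hser, coeff_mk, ← Set.ncard_coe_finset]
  congr 2
  ext n
  simp only [coe_filter, Fintype.mem_piFinset, mem_range, Set.mem_ofPred_eq, iff_and_self]
  rintro ⟨-, hsum⟩ i
  calc n i < p ^ n i := Nat.lt_pow_self (by omega)
    _ ≤ b i * p ^ n i := Nat.le_mul_of_pos_left _ (hb i)
    _ ≤ ∑ i, b i * p ^ n i :=
      single_le_sum (f := fun i => b i * p ^ n i) (fun _ _ => Nat.zero_le _) (mem_univ i)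
    _ < m + 1 := by omega

theorem Phi_pow (hp : 2 ≤ p) (q : ℕ) :
    Phi p ^ q = ∑ r ∈ range (q + 1), ∑ b ∈ posCompositions r q,
      ((Nat.multinomial univ b : ℤ) : ℤ⟦X⟧) * Hser p b := by
  ext m
  rw [coeff_pow_eq_of_coeff_eq (fun j hj => coeff_Phi_eq_coeff_sum_X_pow hp hj),
    sum_pow_eq_sum_posCompositions]
  simp only [map_sum, Int.cast_natCast, coeff_natCast_mul, ← pow_mul, prod_pow_eq_pow_sum,
    coeff_X_pow]
  refine sum_congr rfl fun r _ => sum_congr rfl fun b hb => ?_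
  rw [coeff_Hser hp (mem_posCompositions.mp hb).2, sum_boole, filter_filter]
  simp_rw [mul_comm (p ^ _), eq_comm (a := m)]

lemma Hser_single (hp : 2 ≤ p) : Hser p ![p] = Phi p - X := by
  ext m
  have hsum (n : Fin 1 → ℕ) : ∑ i, ![p] i * p ^ n i = p ^ (n 0 + 1) := by
    simp [pow_succ, mul_comm]
  simp only [Hser, coeff_mk, map_sub, coeff_Phi, coeff_X, hsum, Subsingleton.strictAnti, true_and]
  by_cases h : ∃ t, m = p ^ (t + 1)
  · obtain ⟨t, rfl⟩ := h
    have hset : {n : Fin 1 → ℕ | p ^ (n 0 + 1) = p ^ (t + 1)} = {fun _ => t} := by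
      ext n
      simp [funext_iff, Fin.forall_fin_one, (Nat.pow_right_injective hp).eq_iff]
    rw [hset, Set.ncard_singleton, if_pos ⟨t + 1, rfl⟩,
      if_neg (Nat.one_lt_pow t.succ_ne_zero (by omega)).ne']
    norm_num
  · have hset : {n : Fin 1 → ℕ | p ^ (n 0 + 1) = m} = ∅ :=
      Set.eq_empty_of_forall_notMem fun n hn => h ⟨n 0, hn.symm⟩
    have hpow : (∃ n, m = p ^ n) ↔ m = 1 := by
      refine ⟨fun ⟨n, hn⟩ => ?_, fun hm => ⟨0, by rw [hm, pow_zero]⟩⟩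
      cases n with
      | zero => rwa [pow_zero] at hn
      | succ n => exact absurd ⟨n, hn⟩ h
    simp [hset, hpow]

end Phi

/-- `Φ_p^p(z) − Φ_p(z) + z = Σ_{r=2}^{p} Σ_{b_1+…+b_r=p, b_i ≥ 1}
(p!/(b_1!⋯b_r!)) H_{b_1,…,b_r}(z)`; in particular every coefficient of
`Φ_p^p(z) − Φ_p(z) + z` is divisible by `p`. -/
theorem stmt_3 (p : ℕ) (hp : p.Prime) :
    (Phi p ^ p - Phi p + PowerSeries.X =
      ∑ r ∈ Finset.Icc 2 p,
        ∑ b ∈ (Finset.Nat.antidiagonalTuple r p).filter (fun b => ∀ i, 0 < b i),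
          ((Nat.multinomial Finset.univ b : ℤ) : PowerSeries ℤ) * Hser p b) ∧
    (∀ m : ℕ, (p : ℤ) ∣ PowerSeries.coeff m (Phi p ^ p - Phi p + PowerSeries.X)) := by
  have hexpand : Phi p ^ p - Phi p + X = ∑ r ∈ Icc 2 p, ∑ b ∈ posCompositions r p,
      ((Nat.multinomial univ b : ℤ) : ℤ⟦X⟧) * Hser p b := by
    have hrange : range (p + 1) = insert 0 (insert 1 (Icc 2 p)) := by
      ext r
      simp only [mem_range, mem_insert, mem_Icc]
      have := hp.one_le
      omega
    rw [Phi_pow hp.two_le, hrange, sum_insert (by simp), sum_insert (by simp),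
      posCompositions_zero hp.ne_zero, posCompositions_one hp.pos, sum_empty, sum_singleton,
      univ_unique, Nat.multinomial_singleton, Nat.cast_one, Int.cast_one, one_mul, zero_add,
      Hser_single hp.two_le]
    abel
  refine ⟨hexpand, fun m => ?_⟩
  simp only [hexpand, map_sum, Int.cast_natCast, coeff_natCast_mul]
  refine dvd_sum fun r hr => dvd_sum fun b hb => dvd_mul_of_dvd_left ?_ _
  exact Int.natCast_dvd_natCast.mpr (hp.dvd_multinomial (mem_posCompositions.mp hb).1
    fun i _ => lt_of_mem_posCompositions (mem_Icc.mp hr).1 hb i)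
end

section
/- Let Φ(z) = Σ_{n≥0} z^{3^n}. Then, as an identity of formal power series over ℤ/27ℤ, Σ_{n≥1} N_n z^n = 18z³ + z² + z + (18z³ + 12z²)·Φ(z) + (3z² + 15z)·Φ²(z) + (9z² + 5z + 13)·Φ³(z) + (9z² + 6z + 24)·Φ⁴(z) + (15z + 6)·Φ⁵(z) + (18z + 4)·Φ⁶(z) + (18z + 21)·Φ⁷(z) + 12·Φ⁸(z). -/
/-!
Modulo 3 the Frobenius gives `Φ³ = Φ(z³) = Φ - z`, so `Φ³ - Φ + z = 3D` for an integral series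
`D`. Eliminating `z = Φ - Φ³ + 3D`, the cubic `y³ + y² - 3zy + 2z²` evaluated at the claimed
expansion becomes a polynomial in `Φ` and `D` all of whose coefficients are divisible by `27`.
Both sides are therefore solutions of the cubic over `ℤ/27ℤ` that are `≡ z` modulo `z²`, and
there is only one such solution: `P(A) - P(B) = (A - B)(A² + AB + B² + A + B - 3z)`, and the
second factor is `z` times a unit.
-/

open PowerSeries
open scoped Classical

/-- `Φ(z) = Σ_{n≥0} z^{3^n}` as a formal power series over `ℤ`. -/
noncomputable def Phi3 : PowerSeries ℤ :=
  PowerSeries.mk fun m => if ∃ n : ℕ, m = 3 ^ n then 1 else 0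

theorem PowerSeries.map_frobenius_expand {R : Type*} [CommRing R] (p : ℕ) (hp : p ≠ 0)
    [ExpChar R p] (f : R⟦X⟧) : map (frobenius R p) (expand p hp f) = f ^ p :=
  MvPowerSeries.map_frobenius_expand p hp

theorem PowerSeries.exists_eq_natCast_mul_of_map_eq_zero {n : ℕ} {f : ℤ⟦X⟧}
    (hf : map (Int.castRingHom (ZMod n)) f = 0) : ∃ g : ℤ⟦X⟧, f = n * g := by
  refine ⟨mk fun k => coeff k f / n, ?_⟩
  ext k
  have hk : (n : ℤ) ∣ coeff k f := by
    simpa [coeff_map, ZMod.intCast_zmod_eq_zero_iff_dvd] using congrArg (coeff k) hf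
  rw [← map_natCast (C (R := ℤ)), coeff_C_mul, coeff_mk, Int.mul_ediv_cancel' hk]

theorem Phi3.constantCoeff_eq_zero : constantCoeff Phi3 = 0 := by
  rw [← coeff_zero_eq_constantCoeff_apply, Phi3, coeff_mk, if_neg]
  rintro ⟨n, hn⟩
  exact (pow_pos three_pos n).ne' hn.symm

theorem Phi3.eq_X_add_expand : Phi3 = X + expand 3 three_ne_zero Phi3 := by
  ext k
  rw [map_add, coeff_expand, coeff_X, Phi3, coeff_mk, coeff_mk]
  by_cases h3 : 3 ∣ k
  · obtain ⟨j, rfl⟩ := h3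
    have hpow : (∃ n, 3 * j = 3 ^ n) ↔ ∃ n, j = 3 ^ n :=
      ⟨fun ⟨n, hn⟩ => match n, hn with
        | 0, hn => absurd hn (by omega)
        | n + 1, hn => ⟨n, by rw [pow_succ'] at hn; omega⟩,
       fun ⟨n, hn⟩ => ⟨n + 1, by rw [hn, pow_succ']⟩⟩
    simp only [hpow, if_pos (dvd_mul_right 3 j), Nat.mul_div_cancel_left j three_pos,
      if_neg (show 3 * j ≠ 1 by omega), zero_add]
  · have hpow : (∃ n, k = 3 ^ n) ↔ k = 1 :=
      ⟨fun ⟨n, hn⟩ => match n, hn with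
        | 0, hn => hn
        | n + 1, hn => absurd ⟨3 ^ n, by rw [hn, pow_succ']⟩ h3,
       fun hk => ⟨0, hk⟩⟩
    simp only [hpow, if_neg h3, add_zero]

theorem Phi3.map_zmod_three_pow_three_sub_add_X :
    map (Int.castRingHom (ZMod 3)) (Phi3 ^ 3 - Phi3 + X) = 0 := by
  set φ := map (Int.castRingHom (ZMod 3)) Phi3
  have hfrob : φ ^ 3 = expand 3 three_ne_zero φ := by
    rw [← map_frobenius_expand, ZMod.frobenius_zmod, map_id, id]
  have hφ : φ = X + expand 3 three_ne_zero φ := by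
    simpa [map_expand] using congrArg (map (Int.castRingHom (ZMod 3))) Phi3.eq_X_add_expand
  rw [map_add, map_sub, map_pow, map_X, hfrob]
  linear_combination -hφ

theorem Phi3.exists_pow_three_sub_add_X_eq_three_mul :
    ∃ d : ℤ⟦X⟧, Phi3 ^ 3 - Phi3 + X = 3 * d := by
  obtain ⟨d, hd⟩ := exists_eq_natCast_mul_of_map_eq_zero Phi3.map_zmod_three_pow_three_sub_add_X
  exact ⟨d, by exact_mod_cast hd⟩

section Cubic

variable {R S : Type*} [CommRing R] [CommRing S]

def noncrossingCubic (x y : R) : R := y ^ 3 + y ^ 2 - 3 * x * y + 2 * x ^ 2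

def mod27Expansion (x w : R) : R :=
  18 * x ^ 3 + x ^ 2 + x
    + (18 * x ^ 3 + 12 * x ^ 2) * w
    + (3 * x ^ 2 + 15 * x) * w ^ 2
    + (9 * x ^ 2 + 5 * x + 13) * w ^ 3
    + (9 * x ^ 2 + 6 * x + 24) * w ^ 4
    + (15 * x + 6) * w ^ 5
    + (18 * x + 4) * w ^ 6
    + (18 * x + 21) * w ^ 7
    + 12 * w ^ 8

theorem map_noncrossingCubic (f : R →+* S) (x y : R) :
    f (noncrossingCubic x y) = noncrossingCubic (f x) (f y) := by
  simp [noncrossingCubic, map_ofNat]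

theorem map_mod27Expansion (f : R →+* S) (x w : R) :
    f (mod27Expansion x w) = mod27Expansion (f x) (f w) := by
  simp [mod27Expansion, map_ofNat]

set_option maxHeartbeats 1000000 in
set_option maxRecDepth 10000 in
theorem noncrossingCubic_mod27Expansion [CharP R 27] {x w d : R} (h : w ^ 3 - w + x = 3 * d) :
    noncrossingCubic x (mod27Expansion x w) = 0 := by
  rw [noncrossingCubic, mod27Expansion]
  obtain rfl : x = w - w ^ 3 + 3 * d := by linear_combination h
  ring_nf
  reduce_mod_char!

theorem sq_dvd_mod27Expansion_sub {x w : R} (hw : x ∣ w) : x ^ 2 ∣ mod27Expansion x w - x := by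
  obtain ⟨u, rfl⟩ := hw
  refine ⟨18 * x + 1 + (18 * x ^ 2 + 12 * x) * u + (3 * x ^ 2 + 15 * x) * u ^ 2
    + (9 * x ^ 2 + 5 * x + 13) * x * u ^ 3 + (9 * x ^ 2 + 6 * x + 24) * x ^ 2 * u ^ 4
    + (15 * x + 6) * x ^ 3 * u ^ 5 + (18 * x + 4) * x ^ 4 * u ^ 6
    + (18 * x + 21) * x ^ 5 * u ^ 7 + 12 * x ^ 6 * u ^ 8, ?_⟩
  simp only [mod27Expansion]
  ring

theorem PowerSeries.eq_of_noncrossingCubic_eq_zero {A B : R⟦X⟧}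
    (hA : noncrossingCubic X A = 0) (hB : noncrossingCubic X B = 0)
    (hAX : X ^ 2 ∣ A - X) (hBX : X ^ 2 ∣ B - X) : A = B := by
  obtain ⟨a, ha⟩ := hAX
  obtain ⟨b, hb⟩ := hBX
  rw [sub_eq_iff_eq_add'] at ha hb
  subst ha hb
  set W := (1 + X * a) ^ 2 + (1 + X * a) * (1 + X * b) + (1 + X * b) ^ 2 + a + b
  have hW : IsUnit (X * W - 1) := by
    rw [isUnit_iff_constantCoeff]
    simp
  have hfactor : X ^ 3 * ((a - b) * (X * W - 1)) = X ^ 3 * 0 := by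
    simp only [noncrossingCubic] at hA hB
    linear_combination hA - hB
  rw [sub_eq_zero.mp (hW.mul_left_eq_zero.mp (X_pow_mul_injective hfactor))]

end Cubic

/-- Modulo `27`, the generating function `N(z)` of the numbers of non-crossing
connected graphs (the unique power series with `N_0 = 0`, `N_1 = 1` and
`N³ + N² − 3zN + 2z² = 0`) equals
`18z³ + z² + z + (18z³+12z²)Φ + (3z²+15z)Φ² + (9z²+5z+13)Φ³ + (9z²+6z+24)Φ⁴ +
(15z+6)Φ⁵ + (18z+4)Φ⁶ + (18z+21)Φ⁷ + 12Φ⁸`. -/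
theorem stmt_10 (N : PowerSeries ℤ)
    (h0 : PowerSeries.coeff 0 N = 0)
    (h1 : PowerSeries.coeff 1 N = 1)
    (heq : N ^ 3 + N ^ 2 - 3 * PowerSeries.X * N + 2 * PowerSeries.X ^ 2 = 0) :
    ∀ m : ℕ, (27 : ℤ) ∣ PowerSeries.coeff m
      (N - (18 * PowerSeries.X ^ 3 + PowerSeries.X ^ 2 + PowerSeries.X
        + (18 * PowerSeries.X ^ 3 + 12 * PowerSeries.X ^ 2) * Phi3
        + (3 * PowerSeries.X ^ 2 + 15 * PowerSeries.X) * Phi3 ^ 2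
        + (9 * PowerSeries.X ^ 2 + 5 * PowerSeries.X + 13) * Phi3 ^ 3
        + (9 * PowerSeries.X ^ 2 + 6 * PowerSeries.X + 24) * Phi3 ^ 4
        + (15 * PowerSeries.X + 6) * Phi3 ^ 5
        + (18 * PowerSeries.X + 4) * Phi3 ^ 6
        + (18 * PowerSeries.X + 21) * Phi3 ^ 7
        + 12 * Phi3 ^ 8)) := by
  intro m
  change (27 : ℤ) ∣ coeff m (N - mod27Expansion X Phi3)
  have : CharP (ZMod 27)⟦X⟧ 27 := charP_of_injective_ringHom C_injective 27
  set π : ℤ⟦X⟧ →+* (ZMod 27)⟦X⟧ := map (Int.castRingHom (ZMod 27))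
  obtain ⟨d, hd⟩ := Phi3.exists_pow_three_sub_add_X_eq_three_mul
  have hN : π N = mod27Expansion X (π Phi3) := by
    refine eq_of_noncrossingCubic_eq_zero ?_ (noncrossingCubic_mod27Expansion (d := π d) ?_)
      ?_ (sq_dvd_mod27Expansion_sub ?_)
    · have hN3 : noncrossingCubic X N = 0 := heq
      rw [← map_X (Int.castRingHom (ZMod 27)), ← map_noncrossingCubic, hN3, map_zero]
    · have hd' := congrArg π hd
      rwa [map_add, map_sub, map_pow, map_X, map_mul, map_ofNat] at hd'
    · refine X_pow_dvd_iff.mpr fun k hk => ?_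
      interval_cases k
      · rw [map_sub, coeff_map, h0, coeff_zero_X, map_zero, sub_zero]
      · rw [map_sub, coeff_map, h1, coeff_one_X, map_one, sub_self]
    · simpa [π] using map_dvd π (X_dvd_iff.mpr Phi3.constantCoeff_eq_zero)
  have hzero : π (N - mod27Expansion X Phi3) = 0 := by
    rw [map_sub, hN, map_mod27Expansion, map_X, sub_self]
  have hcoeff := congrArg (coeff m) hzero
  rw [coeff_map, map_zero] at hcoeff
  exact (ZMod.intCast_zmod_eq_zero_iff_dvd _ 27).mp hcoeff
end

section
/- Let p be an odd prime and α a non-negative integer. Then there exist Laurent polynomials a_0(w), a_1(w), …, a_{p^{α+1}−1}(w) with integer coefficients such that, in the ring of formal Laurent series over ℤ/p^{p^α}ℤ in the variable w (which represents z^{1/(p−1)}, i.e. z = w^{p−1}), (p+1)/2 + Σ_{n≥1} B(n;p) · w^{(p−1)n} = Σ_{i=0}^{p^{α+1}−1} a_i(w) · Φ(w)^i, where Φ(w) = Σ_{n≥0} w^{p^n}. In other words, the blossom-tree generating function B_p(z) = (p+1)/2 + Σ_{n≥1} B(n;p) z^n, reduced modulo p^{p^α}, can be expressed as a polynomial in Φ(z^{1/(p−1)})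 of degree at most p^{α+1} − 1, with coefficients that are Laurent polynomials in z^{1/(p−1)} over the integers. -/
/-!
Write `p = 2c + 1`. If `T(z) = 1 + z T(z)ᵖ`, the coefficients of `Tʲ` are the Raney numbers,
and a binomial identity gives `B_p = p T - c T²`; in the variable `w` this reads
`w² B = p w u - c u²` with `u(w) = w T(w^{p-1})`, the root of `u = w + uᵖ` in `w ℤ⟦w⟧`.
Modulo `p`, Frobenius gives `Φᵖ ≡ Φ(wᵖ) = Φ - w`, so `Φ` solves the same equation and `u ≡ Φ`.
Iterating `g ↦ w + gᵖ` from `Φ` gains one power of `p` per step, so `u` is congruent modulo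
`p^N` (with `N = p^α`) to an element of `ℤ[w, Φ]`. As `Φᵖ - Φ + w ≡ 0 (mod p)`, reducing modulo the
monic `(Yᵖ - Y + w)^N` brings the degree in `Φ` below `pN`, and dividing by `w²` gives the Laurent
polynomial coefficients.
-/

open PowerSeries
open scoped Classical

/-- The number of blossom trees:
`B(n;k) = ((k+1)/(n((k−1)n+2)))·C(kn, n−1)`. -/
def BlossomTree (n k : ℕ) : ℕ :=
  (k + 1) * Nat.choose (k * n) (n - 1) / (n * ((k - 1) * n + 2))

/-- The blossom-tree generating function `B_p(z) = (p+1)/2 + Σ_{n≥1} B(n;p) zⁿ`,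
written in the variable `w = z^{1/(p−1)}`, i.e.
`(p+1)/2 + Σ_{n≥1} B(n;p) w^{(p−1)n}`. -/
noncomputable def BlossomSeries (p : ℕ) : PowerSeries ℤ :=
  PowerSeries.mk fun m =>
    if m = 0 then (((p + 1) / 2 : ℕ) : ℤ)
    else if (p - 1) ∣ m then (BlossomTree (m / (p - 1)) p : ℤ) else 0

theorem natCast_pow_dvd_sub_iterate {R : Type*} [CommRing R] {p : ℕ} {x a b : R}
    (ha : a = x + a ^ p) (hab : (p : R) ∣ a - b) (k : ℕ) :
    (p : R) ^ (k + 1) ∣ a - (fun g => x + g ^ p)^[k] b := by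
  induction k with
  | zero => simpa using hab
  | succ k ih =>
    set g := (fun g => x + g ^ p)^[k] b
    have hstep :
        a - (x + g ^ p) = (∑ i ∈ Finset.range p, a ^ i * g ^ (p - 1 - i)) * (a - g) := by
      rw [geom_sum₂_mul]; linear_combination ha
    rw [Function.iterate_succ_apply', hstep, pow_succ']
    exact mul_dvd_mul (dvd_geom_sum₂_self (dvd_trans (dvd_pow_self _ k.succ_ne_zero) ih)) ih

namespace PowerSeries

variable {R : Type*} [CommRing R]

theorem C_dvd_iff_dvd_coeff (r : R) (f : R⟦X⟧) : C r ∣ f ↔ ∀ n, r ∣ coeff n f := by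
  refine ⟨fun ⟨g, hg⟩ n => ⟨coeff n g, by rw [hg, coeff_C_mul]⟩, fun h => ?_⟩
  choose g hg using h
  exact ⟨mk g, ext fun n => by rw [coeff_C_mul, coeff_mk, ← hg]⟩

theorem eq_of_forall_X_pow_dvd_sub {f g : R⟦X⟧} (h : ∀ n, X ^ n ∣ f - g) : f = g := by
  ext n
  rw [← sub_eq_zero, ← map_sub]
  exact X_pow_dvd_iff.mp (h (n + 1)) n n.lt_succ_self

theorem exists_isFixedPt_of_X_pow_dvd_sub {F : R⟦X⟧ → R⟦X⟧}
    (hF : ∀ k a b, X ^ k ∣ a - b → X ^ (k + 1) ∣ F a - F b) : ∃ a, Function.IsFixedPt F a := by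
  set x : ℕ → R⟦X⟧ := fun n => F^[n] 0
  have hx : ∀ n j, X ^ n ∣ x (n + j) - x n := by
    intro n
    induction n with
    | zero => simp
    | succ n ih =>
      intro j
      simpa only [x, Nat.succ_add, Function.iterate_succ_apply'] using hF n _ _ (ih j)
  set a := mk fun n => coeff n (x (n + 1))
  have ha : ∀ n, X ^ n ∣ a - x n := fun n => X_pow_dvd_iff.mpr fun m hm => by
    obtain ⟨j, rfl⟩ := Nat.exists_eq_add_of_le hm
    have := X_pow_dvd_iff.mp (hx (m + 1) j) m m.lt_succ_self
    rw [map_sub, sub_eq_zero] at this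
    rw [map_sub, coeff_mk, ← this, Nat.add_right_comm, sub_self]
  refine ⟨a, eq_of_forall_X_pow_dvd_sub fun n => ?_⟩
  cases n with
  | zero => simp
  | succ n =>
    have h := dvd_sub (hF n _ _ (ha n)) (ha (n + 1))
    rwa [show F (x n) = x (n + 1) from (Function.iterate_succ_apply' F n 0).symm,
      sub_sub_sub_cancel_right] at h

theorem dvd_sub_of_eq_X_add_pow {n : ℕ} (hn : 2 ≤ n) {a b r : R⟦X⟧} (ha : a = X + a ^ n)
    (hXa : X ∣ a) (hXb : X ∣ b) (hr : r ∣ X + b ^ n - b) : r ∣ a - b := by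
  set s := ∑ i ∈ Finset.range n, a ^ i * b ^ (n - 1 - i)
  have hs : X ∣ s := (dvd_geom_sum₂_iff_of_dvd_sub (dvd_sub hXa hXb)).mpr
    (dvd_mul_of_dvd_right (dvd_pow hXb (by omega)) _)
  have hunit : IsUnit (1 - s) := by
    rw [isUnit_iff_constantCoeff, map_sub, map_one, X_dvd_iff.mp hs, sub_zero]
    exact isUnit_one
  have key : X + b ^ n - b = (a - b) * (1 - s) := by
    have := geom_sum₂_mul a b n
    linear_combination (-1 : R⟦X⟧) * ha + this
  rwa [key, hunit.dvd_mul_right] at hr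

theorem natCast_dvd_iff_map_zmod_eq_zero (n : ℕ) (f : ℤ⟦X⟧) :
    (n : ℤ⟦X⟧) ∣ f ↔ map (Int.castRingHom (ZMod n)) f = 0 := by
  rw [← map_natCast C, C_dvd_iff_dvd_coeff, PowerSeries.ext_iff]
  simp [ZMod.intCast_zmod_eq_zero_iff_dvd]

theorem expand_zmod_eq_pow (p : ℕ) [Fact p.Prime] (f : (ZMod p)⟦X⟧) :
    expand p (NeZero.ne p) f = f ^ p := by
  have := MvPowerSeries.map_frobenius_expand p (NeZero.ne p) (f := f)
  rwa [ZMod.frobenius_zmod, MvPowerSeries.map_id] at this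

theorem natCast_dvd_pow_sub_expand (p : ℕ) [Fact p.Prime] (f : ℤ⟦X⟧) :
    (p : ℤ⟦X⟧) ∣ f ^ p - expand p (NeZero.ne p) f := by
  rw [natCast_dvd_iff_map_zmod_eq_zero, map_sub, map_pow, map_expand, expand_zmod_eq_pow,
    sub_self]

end PowerSeries

theorem X_dvd_Phi {p : ℕ} (hp : p ≠ 0) : X ∣ Phi p := by
  rw [X_dvd_iff, ← coeff_zero_eq_constantCoeff_apply, Phi, coeff_mk, if_neg]
  rintro ⟨n, hn⟩
  exact pow_ne_zero n hp hn.symm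

theorem expand_Phi {p : ℕ} (hp : 2 ≤ p) : expand p (by omega) (Phi p) = Phi p - X := by
  ext m
  rw [map_sub, coeff_X, Phi, coeff_mk]
  by_cases hm : p ∣ m
  · obtain ⟨m, rfl⟩ := hm
    have h1 : p * m ≠ 1 := fun h => by have := Nat.eq_one_of_mul_eq_one_right h; omega
    have : (∃ n, m = p ^ n) ↔ ∃ n, p * m = p ^ n := by
      constructor
      · rintro ⟨n, rfl⟩; exact ⟨n + 1, by ring⟩
      · rintro ⟨_ | n, hn⟩
        · exact absurd hn h1
        · exact ⟨n, by rw [pow_succ'] at hn; exact Nat.eq_of_mul_eq_mul_left (by omega) hn⟩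
    rw [coeff_expand_mul, coeff_mk, if_neg h1, sub_zero, this]
  · rw [coeff_expand_of_not_dvd _ _ _ hm]
    have : (∃ n, m = p ^ n) ↔ m = 1 := by
      refine ⟨?_, fun h => ⟨0, by simp [h]⟩⟩
      rintro ⟨_ | n, rfl⟩
      · rfl
      · exact absurd (dvd_pow_self p n.succ_ne_zero) hm
    simp only [this, sub_self]

theorem natCast_dvd_X_add_Phi_pow_sub {p : ℕ} (hp : p.Prime) :
    (p : ℤ⟦X⟧) ∣ X + Phi p ^ p - Phi p := by
  have := Fact.mk hp
  have := natCast_dvd_pow_sub_expand p (Phi p)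
  rwa [expand_Phi hp.two_le, sub_sub_eq_add_sub, add_comm] at this

/-- The Raney numbers `j / ((q+1)k + j) · C((q+1)k + j, k)`, written without division. -/
def raney (q j : ℕ) : ℕ → ℤ
  | 0 => 1
  | k + 1 => ((q + 1) * k + q + j).choose (k + 1) - q * ((q + 1) * k + q + j).choose k

theorem raney_zero_left (q k : ℕ) : raney q 0 (k + 1) = 0 := by
  have h := Nat.choose_succ_right_eq ((q + 1) * k + q) k
  rw [show (q + 1) * k + q - k = q * (k + 1) by rw [Nat.sub_eq_of_eq_add]; ring] at h
  have h' : ((k : ℤ) + 1) * raney q 0 (k + 1) = 0 := by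
    zify at h
    simp only [raney, add_zero]
    linear_combination h
  exact (mul_eq_zero.mp h').resolve_left (by positivity)

theorem raney_succ_succ (q j k : ℕ) :
    raney q (j + 1) (k + 1) = raney q j (k + 1) + raney q (j + q + 1) k := by
  cases k with
  | zero => simp [raney]
  | succ k =>
    simp only [raney]
    have e : (q + 1) * k + q + (j + q + 1) = (q + 1) * (k + 1) + q + j := by ring
    rw [e, show (q + 1) * (k + 1) + q + (j + 1) = ((q + 1) * (k + 1) + q + j) + 1 by ring,
      Nat.choose_succ_succ', Nat.choose_succ_succ' _ k]
    push_cast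
    ring

theorem coeff_pow_eq_raney {q : ℕ} {T : ℤ⟦X⟧} (hT : T = 1 + X * T ^ (q + 1)) (j k : ℕ) :
    coeff k (T ^ j) = raney q j k := by
  induction k generalizing j with
  | zero =>
    have : constantCoeff T = 1 := by rw [hT]; simp
    simp [this, raney]
  | succ k ih =>
    induction j with
    | zero => simp [coeff_one, raney_zero_left]
    | succ j ihj =>
      have : T ^ (j + 1) = T ^ j + X * T ^ (j + q + 1) := by
        rw [pow_succ, add_assoc, pow_add T j (q + 1)]
        nth_rw 2 [hT]
        ring
      rw [this, map_add, coeff_succ_X_mul, ihj, ih, raney_succ_succ]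

theorem blossomTree_eq_raney (c n : ℕ) :
    (BlossomTree (n + 1) (2 * c + 1) : ℤ) =
      (2 * c + 1) * raney (2 * c) 1 (n + 1) - c * raney (2 * c) 2 (n + 1) := by
  set N := (2 * c + 1) * (n + 1) with hN
  have h1 := Nat.choose_succ_right_eq N n
  have h2 := Nat.add_one_mul_choose_eq N n
  have h3 := Nat.choose_mul_succ_eq N n
  rw [show N - n = 2 * c * (n + 1) + 1 by rw [Nat.sub_eq_of_eq_add]; ring] at h1
  rw [show N + 1 - n = 2 * c * (n + 1) + 2 by rw [Nat.sub_eq_of_eq_add]; ring] at h3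
  zify at h1 h2 h3
  have hN' : (N : ℤ) = (2 * c + 1) * (n + 1) := by rw [hN]; push_cast; ring
  rw [hN'] at h2 h3
  simp only [raney, show (2 * c + 1) * n + 2 * c + 1 = N by ring,
    show (2 * c + 1) * n + 2 * c + 2 = N + 1 by ring]
  -- the division in `BlossomTree` is exact; `h1`, `h2`, `h3` express all binomials via `C(N, n)`
  have key : (((n + 1) * (2 * c * (n + 1) + 2) : ℕ) : ℤ) *
      ((2 * c + 1) * ((N.choose (n + 1) : ℤ) - 2 * c * N.choose n)
        - c * (((N + 1).choose (n + 1) : ℤ) - 2 * c * (N + 1).choose n))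
      = ((2 * c + 2) * N.choose n : ℕ) := by
    push_cast
    linear_combination (2 * (c : ℤ) * (n + 1) + 2) * (2 * c + 1) * h1
      + c * (2 * c * (n + 1) + 2) * h2 - 2 * c * c * (n + 1) * h3
  rw [BlossomTree, Nat.add_sub_cancel, Nat.add_sub_cancel, ← hN, Int.natCast_div, ← key,
    Int.mul_ediv_cancel_left _ (by positivity)]
  push_cast
  ring

theorem blossomSeries_eq_expand {c : ℕ} (hc : c ≠ 0) {T : ℤ⟦X⟧}
    (hT : T = 1 + X * T ^ (2 * c + 1)) :
    BlossomSeries (2 * c + 1) =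
      expand (2 * c) (by omega) (C (2 * c + 1 : ℤ) * T - C (c : ℤ) * T ^ 2) := by
  have h1 (k : ℕ) : coeff k T = raney (2 * c) 1 k := by simpa using coeff_pow_eq_raney hT 1 k
  have hB (k : ℕ) : coeff k (C (2 * c + 1 : ℤ) * T - C (c : ℤ) * T ^ 2) =
      (2 * c + 1) * raney (2 * c) 1 k - c * raney (2 * c) 2 k := by
    rw [map_sub, coeff_C_mul, coeff_C_mul, h1, coeff_pow_eq_raney hT]
  ext m
  rw [BlossomSeries, coeff_mk, coeff_expand, Nat.add_sub_cancel]
  by_cases hdvd : 2 * c ∣ m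
  · obtain ⟨_ | n, rfl⟩ := hdvd
    · rw [mul_zero, if_pos rfl, if_pos (dvd_zero _), Nat.zero_div, hB]
      simp only [raney]
      omega
    · rw [if_neg (by simp [hc]), if_pos (dvd_mul_right _ _), if_pos (dvd_mul_right _ _),
        Nat.mul_div_cancel_left _ (by omega), hB, blossomTree_eq_raney]
  · rw [if_neg hdvd, if_neg hdvd, if_neg (by rintro rfl; exact hdvd (dvd_zero _))]

theorem exists_X_sq_mul_blossomSeries {c : ℕ} (hc : c ≠ 0) :
    ∃ u : ℤ⟦X⟧, u = X + u ^ (2 * c + 1) ∧ X ∣ u ∧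
      X ^ 2 * BlossomSeries (2 * c + 1) = C (2 * c + 1 : ℤ) * X * u - C (c : ℤ) * u ^ 2 := by
  obtain ⟨T, hT⟩ := exists_isFixedPt_of_X_pow_dvd_sub
    (F := fun T : ℤ⟦X⟧ => 1 + X * T ^ (2 * c + 1)) fun k a b h => by
      rw [add_sub_add_left_eq_sub, ← mul_sub, pow_succ']
      exact mul_dvd_mul_left X (h.trans (sub_dvd_pow_sub_pow a b _))
  set S := expand (2 * c) (by omega) T
  have hS : S = 1 + X ^ (2 * c) * S ^ (2 * c + 1) := by
    have := congrArg (expand (2 * c) (by omega)) hT.eq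
    rw [map_add, map_one, map_mul, map_pow, expand_X] at this
    exact this.symm
  refine ⟨X * S, by linear_combination X * hS, dvd_mul_right X S, ?_⟩
  rw [blossomSeries_eq_expand hc hT.eq.symm]
  simp only [map_sub, map_mul, map_pow, expand_C]
  ring

noncomputable def evalPhi (p : ℕ) : Polynomial (Polynomial ℤ) →+* ℤ⟦X⟧ :=
  Polynomial.eval₂RingHom Polynomial.coeToPowerSeries.ringHom (Phi p)

@[simp]
theorem evalPhi_C (p : ℕ) (a : Polynomial ℤ) : evalPhi p (Polynomial.C a) = a := by
  simp [evalPhi]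

@[simp]
theorem evalPhi_X (p : ℕ) : evalPhi p Polynomial.X = Phi p := by
  simp [evalPhi]

/-- `Yᵖ - Y + X`, with `Y` the outer variable, standing for `Φ`. -/
noncomputable def artinSchreier (p : ℕ) : Polynomial (Polynomial ℤ) :=
  Polynomial.X ^ p + (Polynomial.C Polynomial.X - Polynomial.X)

theorem artinSchreier_monic {p : ℕ} (hp : 2 ≤ p) :
    (artinSchreier p).Monic ∧ (artinSchreier p).natDegree = p := by
  have hlow :
      (Polynomial.C Polynomial.X - Polynomial.X : Polynomial (Polynomial ℤ)).degree < p := by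
    have :
        (Polynomial.C Polynomial.X - Polynomial.X : Polynomial (Polynomial ℤ)).natDegree ≤ 1 := by
      compute_degree
    exact Polynomial.degree_le_natDegree.trans_lt (by exact_mod_cast (by omega : _ < p))
  refine ⟨Polynomial.monic_X_pow_add hlow, ?_⟩
  rw [artinSchreier,
    Polynomial.natDegree_add_eq_left_of_degree_lt (by rwa [Polynomial.degree_X_pow]),
    Polynomial.natDegree_X_pow]

theorem natCast_dvd_evalPhi_artinSchreier {p : ℕ} (hp : p.Prime) :
    (p : ℤ⟦X⟧) ∣ evalPhi p (artinSchreier p) := by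
  have : evalPhi p (artinSchreier p) = X + Phi p ^ p - Phi p := by
    simp only [artinSchreier, map_add, map_sub, map_pow, evalPhi_X, evalPhi_C, Polynomial.coe_X]
    ring
  exact this ▸ natCast_dvd_X_add_Phi_pow_sub hp

theorem exists_evalPhi_dvd_sub {p : ℕ} (hp : p.Prime) {u : ℤ⟦X⟧} (hu : u = X + u ^ p)
    (hXu : X ∣ u) (N : ℕ) : ∃ G, (p : ℤ⟦X⟧) ^ N ∣ u - evalPhi p G := by
  have hbase := dvd_sub_of_eq_X_add_pow hp.two_le hu hXu (X_dvd_Phi hp.ne_zero)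
    (natCast_dvd_X_add_Phi_pow_sub hp)
  have hmem : ∀ k, (fun g => X + g ^ p)^[k] (Phi p) ∈ (evalPhi p).range := by
    intro k
    induction k with
    | zero => exact ⟨Polynomial.X, evalPhi_X p⟩
    | succ k ih =>
      rw [Function.iterate_succ_apply']
      exact add_mem ⟨Polynomial.C Polynomial.X, by rw [evalPhi_C, Polynomial.coe_X]⟩ (pow_mem ih p)
  obtain ⟨G, hG⟩ := hmem N
  exact ⟨G, hG ▸ (pow_dvd_pow _ N.le_succ).trans (natCast_pow_dvd_sub_iterate hu hbase N)⟩

theorem exists_evalPhi_dvd_X_sq_mul_blossomSeries_sub {c : ℕ} (hp : (2 * c + 1).Prime)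
    (N : ℕ) : ∃ P, ((2 * c + 1 : ℕ) : ℤ⟦X⟧) ^ N ∣
      X ^ 2 * BlossomSeries (2 * c + 1) - evalPhi (2 * c + 1) P := by
  obtain ⟨u, hu, hXu, hB⟩ :=
    exists_X_sq_mul_blossomSeries (c := c) (by rintro rfl; norm_num at hp)
  obtain ⟨G, hG⟩ := exists_evalPhi_dvd_sub hp hu hXu N
  refine ⟨Polynomial.C (Polynomial.C (2 * c + 1 : ℤ) * Polynomial.X) * G
    - Polynomial.C (Polynomial.C (c : ℤ)) * G ^ 2, ?_⟩
  set g := evalPhi (2 * c + 1) G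
  have : X ^ 2 * BlossomSeries (2 * c + 1) - evalPhi (2 * c + 1)
      (Polynomial.C (Polynomial.C (2 * c + 1 : ℤ) * Polynomial.X) * G
        - Polynomial.C (Polynomial.C (c : ℤ)) * G ^ 2)
      = (u - g) * (C (2 * c + 1 : ℤ) * X - C (c : ℤ) * (u + g)) := by
    simp only [hB, map_sub, map_mul, map_pow, evalPhi_C, Polynomial.coe_C, Polynomial.coe_X, g]
    ring
  rw [this]
  exact dvd_mul_of_dvd_left hG _

theorem exists_natDegree_lt_evalPhi_dvd_sub {p N : ℕ} (hp : p.Prime) (hN : N ≠ 0)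
    (P : Polynomial (Polynomial ℤ)) :
    ∃ P', P'.natDegree < p * N ∧ (p : ℤ⟦X⟧) ^ N ∣ evalPhi p P - evalPhi p P' := by
  obtain ⟨hmon, hdeg⟩ := artinSchreier_monic hp.two_le
  have hMdeg : (artinSchreier p ^ N).natDegree = p * N := by
    rw [hmon.natDegree_pow, hdeg, mul_comm]
  refine ⟨P %ₘ artinSchreier p ^ N, ?_, ?_⟩
  · rw [← hMdeg]
    refine Polynomial.natDegree_modByMonic_lt _ (hmon.pow N) fun h => ?_
    have := congrArg Polynomial.natDegree h
    rw [hMdeg, Polynomial.natDegree_one, mul_eq_zero] at this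
    exact this.elim hp.ne_zero hN
  · rw [Polynomial.modByMonic_eq_sub_mul_div, map_sub, sub_sub_cancel, map_mul, map_pow]
    exact dvd_mul_of_dvd_left (pow_dvd_pow_of_dvd (natCast_dvd_evalPhi_artinSchreier hp) N) _

theorem finite_support_ofPowerSeries_coe {R : Type*} [CommRing R] (P : Polynomial R) :
    (HahnSeries.ofPowerSeries ℤ R (P : R⟦X⟧)).support.Finite := by
  refine (P.support.finite_toSet.image ((↑) : ℕ → ℤ)).subset fun i hi => ?_
  rw [HahnSeries.mem_support, PowerSeries.coeff_coe] at hi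
  split_ifs at hi with hneg
  · exact absurd rfl hi
  · exact ⟨i.natAbs, by simpa using hi, by omega⟩

theorem exists_laurentSeries_of_X_sq_mul {R : Type*} [CommRing R] {r : R} {F φ : R⟦X⟧}
    {P : Polynomial (Polynomial R)} {n : ℕ} (hP : P.natDegree < n)
    (h : C r ∣ X ^ 2 * F - P.eval₂ Polynomial.coeToPowerSeries.ringHom φ) :
    ∃ q : Fin n → LaurentSeries R, (∀ i, (q i).support.Finite) ∧
      ∀ m : ℤ, r ∣ (HahnSeries.ofPowerSeries ℤ R F -
        ∑ i, q i * (HahnSeries.ofPowerSeries ℤ R φ) ^ (i : ℕ)).coeff m := by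
  set L := HahnSeries.ofPowerSeries ℤ R
  set Xinv2 : LaurentSeries R := HahnSeries.single (-2) 1
  refine ⟨fun i => Xinv2 * L (P.coeff i), fun i => ?_, fun m => ?_⟩
  · exact (((Set.finite_singleton _).subset HahnSeries.support_single_subset).add
      (finite_support_ofPowerSeries_coe _)).subset HahnSeries.support_mul_subset
  · have key : L F - ∑ i : Fin n, Xinv2 * L (P.coeff i) * L φ ^ (i : ℕ) =
        Xinv2 * L (X ^ 2 * F - P.eval₂ Polynomial.coeToPowerSeries.ringHom φ) := by
      rw [Polynomial.eval₂_eq_sum_range' _ hP, map_sub, map_mul, map_sum, mul_sub, Finset.mul_sum,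
        ← mul_assoc, HahnSeries.ofPowerSeries_X_pow, HahnSeries.single_mul_single,
        Fin.sum_univ_eq_sum_range (fun i => Xinv2 * L (P.coeff i) * L φ ^ i)]
      simp only [map_mul, map_pow, mul_assoc, Polynomial.coeToPowerSeries.ringHom_apply]
      norm_num
    obtain ⟨E, hE⟩ := h
    rw [key, hE, map_mul, HahnSeries.ofPowerSeries_C, mul_left_comm, HahnSeries.C_mul_eq_smul,
      HahnSeries.coeff_smul, smul_eq_mul]
    exact dvd_mul_right _ _

/-- For an odd prime `p` and a non-negative integer `α`, the blossom-tree generating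
function `B_p(z)`, reduced modulo `p^{p^α}`, is a polynomial of degree at most
`p^{α+1} − 1` in `Φ(z^{1/(p−1)})`, with coefficients that are Laurent polynomials in
`z^{1/(p−1)}` over `ℤ` (represented as Laurent series in `w = z^{1/(p−1)}` with finite
support). -/
theorem stmt_18 (p : ℕ) (hp : p.Prime) (hodd : Odd p) (α : ℕ) :
    ∃ q : Fin (p ^ (α + 1)) → LaurentSeries ℤ,
      (∀ i, (q i).support.Finite) ∧
      ∀ m : ℤ, (p : ℤ) ^ (p ^ α) ∣
        ((HahnSeries.ofPowerSeries ℤ ℤ) (BlossomSeries p) -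
          ∑ i, q i * ((HahnSeries.ofPowerSeries ℤ ℤ) (Phi p)) ^ (i : ℕ)).coeff m := by
  obtain ⟨c, rfl⟩ := hodd
  obtain ⟨P, hP⟩ := exists_evalPhi_dvd_X_sq_mul_blossomSeries_sub hp ((2 * c + 1) ^ α)
  obtain ⟨P', hdeg, hP'⟩ :=
    exists_natDegree_lt_evalPhi_dvd_sub hp (pow_ne_zero α hp.ne_zero) P
  refine exists_laurentSeries_of_X_sq_mul (P := P') (by rwa [pow_succ']) ?_
  rw [map_pow, map_natCast C]
  exact sub_add_sub_cancel (X ^ 2 * BlossomSeries _) (evalPhi _ P) _ ▸ dvd_add hP hP'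
end
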